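/- arXiv:math/0612766 — 2 statements merged into one kernel-verified Lean document; each statement's English description precedes it below -/
import Mathlib

section
/- Let κ be a real constant with κ ≠ 0, and let (λ, u, H, p, A) be a fundamental data set on an open set Ω ⊆ ℂ for (κ, τ) with τ = 0 and with H ≡ 0 on Ω (the minimal case). Then for every θ ∈ ℝ, the rotated data (λ, u, 0, e^{iθ}·p, e^{iθ}·A) is again a fundamental data set on Ω for (κ, 0). (This is the associate family of a minimal surface in 𝕄²(κ)×ℝ.) -/
open Complex

/-- Wirtinger derivative `∂f/∂z = (f_s - i f_t)/2`. -/
noncomputable def wdz (f : ℂ → ℂ) (z : ℂ) : ℂ :=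
  (fderiv ℝ f z 1 - Complex.I * fderiv ℝ f z Complex.I) / 2

/-- Wirtinger derivative `∂f/∂z̄ = (f_s + i f_t)/2`. -/
noncomputable def wdzbar (f : ℂ → ℂ) (z : ℂ) : ℂ :=
  (fderiv ℝ f z 1 + Complex.I * fderiv ℝ f z Complex.I) / 2

/-- A fundamental data set `(λ, u, H, p, A)` on `Ω` for the pair `(κ, τ)`:
smooth functions `lam, u, H : Ω → ℝ` with `lam > 0`, and `p, A : Ω → ℂ`,
satisfying the integrability equations (C.1)–(C.4). -/
structure IsFundData (κ τ : ℝ) (Ω : Set ℂ) (lam u H : ℂ → ℝ) (p A : ℂ → ℂ) : Prop where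
  smooth_lam : ContDiffOn ℝ (⊤ : ℕ∞) lam Ω
  smooth_u : ContDiffOn ℝ (⊤ : ℕ∞) u Ω
  smooth_H : ContDiffOn ℝ (⊤ : ℕ∞) H Ω
  smooth_p : ContDiffOn ℝ (⊤ : ℕ∞) p Ω
  smooth_A : ContDiffOn ℝ (⊤ : ℕ∞) A Ω
  lam_pos : ∀ z ∈ Ω, 0 < lam z
  c1 : ∀ z ∈ Ω, wdzbar p z =
    ((lam z : ℂ) / 2) * (wdz (fun w => (H w : ℂ)) z + (u z : ℂ) * A z * ((κ : ℂ) - 4 * (τ : ℂ) ^ 2))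
  c2 : ∀ z ∈ Ω, wdzbar A z = ((u z : ℂ) * (lam z : ℂ) / 2) * ((H z : ℂ) + Complex.I * (τ : ℂ))
  c3 : ∀ z ∈ Ω, wdz (fun w => (u w : ℂ)) z =
    -((H z : ℂ) - Complex.I * (τ : ℂ)) * A z - (2 * p z / (lam z : ℂ)) * (starRingEnd ℂ) (A z)
  c4 : ∀ z ∈ Ω, 4 * (‖A z‖) ^ 2 / lam z = 1 - (u z) ^ 2

lemma wdz_const (a z : ℂ) : wdz (fun _ => a) z = 0 := by
  unfold wdz
  rw [fderiv_fun_const]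
  simp

/-- The associate family of a minimal surface in `𝕄²(κ) × ℝ`: rotating `p` and `A`
by `e^{iθ}` preserves the fundamental equations when `τ = 0` and `H ≡ 0`. -/
theorem stmt_3 (κ : ℝ) (hκ : κ ≠ 0) (Ω : Set ℂ) (hΩ : IsOpen Ω)
    (lam u : ℂ → ℝ) (p A : ℂ → ℂ)
    (h : IsFundData κ 0 Ω lam u (fun _ => 0) p A) (θ : ℝ) :
    IsFundData κ 0 Ω lam u (fun _ => 0)
      (fun z => Complex.exp (Complex.I * θ) * p z)
      (fun z => Complex.exp (Complex.I * θ) * A z) := by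
  set c := Complex.exp (Complex.I * θ) with hc
  have hcc : c * (starRingEnd ℂ) c = 1 := by
    rw [hc, ← Complex.exp_conj, ← Complex.exp_add]
    simp [Complex.exp_eq_one_iff]
  have habs : ‖c‖ = 1 := by
    rw [hc, Complex.norm_exp]
    simp
  have hdp : ∀ z ∈ Ω, DifferentiableAt ℝ p z := fun z hz =>
    (h.smooth_p.contDiffAt (hΩ.mem_nhds hz)).differentiableAt (by simp)
  have hdA : ∀ z ∈ Ω, DifferentiableAt ℝ A z := fun z hz =>
    (h.smooth_A.contDiffAt (hΩ.mem_nhds hz)).differentiableAt (by simp)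
  have key : ∀ (f : ℂ → ℂ) (z : ℂ), DifferentiableAt ℝ f z →
      fderiv ℝ (fun w => c * f w) z = c • fderiv ℝ f z := by
    intro f z hf
    exact fderiv_const_mul hf c
  have kbar : ∀ (f : ℂ → ℂ) (z : ℂ), DifferentiableAt ℝ f z →
      wdzbar (fun w => c * f w) z = c * wdzbar f z := by
    intro f z hf
    unfold wdzbar
    rw [key f z hf]
    simp only [ContinuousLinearMap.smul_apply, smul_eq_mul]
    ring
  constructor
  · exact h.smooth_lam
  · exact h.smooth_u
  · exact h.smooth_H
  · exact contDiffOn_const.mul h.smooth_p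
  · exact contDiffOn_const.mul h.smooth_A
  · exact h.lam_pos
  · intro z hz
    rw [kbar p z (hdp z hz), h.c1 z hz]
    simp only [Complex.ofReal_zero, wdz_const]
    ring
  · intro z hz
    rw [kbar A z (hdA z hz), h.c2 z hz]
    push_cast
    ring
  · intro z hz
    rw [h.c3 z hz]
    simp only [map_mul]
    have : (2 * (c * p z) / (lam z : ℂ)) * ((starRingEnd ℂ) c * (starRingEnd ℂ) (A z))
        = (c * (starRingEnd ℂ) c) * ((2 * p z / (lam z : ℂ)) * (starRingEnd ℂ) (A z)) := by
      ring
    rw [this, hcc]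
    push_cast
    ring
  · intro z hz
    rw [← h.c4 z hz]
    rw [norm_mul, habs]
    ring
end

section
/- (Bonnet mate of a helicoidal surface in a product space, on the level of fundamental data.) Let κ ≠ 0 be a real constant, let I ⊆ ℝ be an open interval, and let Ω = {z ∈ ℂ : Re z ∈ I}. Suppose (λ, u, H, p, A) is a fundamental data set on Ω for (κ, τ) with τ = 0 such that all five functions depend only on Re z, i.e., there are smooth λ₀, u₀, H₀ : I → ℝ and p₀, A₀ : I → ℂ with λ(z) = λ₀(Re z), u(z) = u₀(Re z), H(z) = H₀(Re z), p(z) = p₀(Re z), A(z) = A₀(Re z). Then (λ, u, H, conj(p), conj(A)) is also a fundamental data set on Ω for (κ, 0). -/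
open Complex

lemma aux_fderiv_conj (f : ℂ → ℂ) (z v : ℂ) (hf : DifferentiableAt ℝ f z) :
    fderiv ℝ (fun w => (starRingEnd ℂ) (f w)) z v = (starRingEnd ℂ) (fderiv ℝ f z v) := by
  have h1 : HasFDerivAt (fun w => (starRingEnd ℂ) (f w))
      ((Complex.conjCLE : ℂ ≃L[ℝ] ℂ).toContinuousLinearMap.comp (fderiv ℝ f z)) z :=
    ((Complex.conjCLE : ℂ ≃L[ℝ] ℂ).toContinuousLinearMap.hasFDerivAt).comp z hf.hasFDerivAt
  rw [h1.fderiv]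
  simp

lemma wdzbar_conj (f : ℂ → ℂ) (z : ℂ) (hf : DifferentiableAt ℝ f z) :
    wdzbar (fun w => (starRingEnd ℂ) (f w)) z = (starRingEnd ℂ) (wdz f z) := by
  simp only [wdzbar, wdz, aux_fderiv_conj f z _ hf, map_div₀, map_sub, map_mul, Complex.conj_I,
    map_ofNat]
  ring

lemma fderivI_zero (f : ℂ → ℂ) (f0 : ℝ → ℂ) {I : Set ℝ} (hIopen : IsOpen I)
    (hf0 : ContDiffOn ℝ (⊤ : ℕ∞) f0 I) (hf : ∀ z : ℂ, z.re ∈ I → f z = f0 z.re)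
    {z : ℂ} (hz : z.re ∈ I) : fderiv ℝ f z Complex.I = 0 := by
  have hop : IsOpen {w : ℂ | w.re ∈ I} := hIopen.preimage Complex.continuous_re
  have hev : f =ᶠ[nhds z] fun w => f0 w.re := by
    filter_upwards [hop.mem_nhds hz] with w hw using hf w hw
  rw [hev.fderiv_eq]
  have hd : DifferentiableAt ℝ f0 z.re :=
    (hf0.contDiffAt (hIopen.mem_nhds hz)).differentiableAt (by simp)
  have h1 : HasFDerivAt (fun w : ℂ => f0 w.re) ((fderiv ℝ f0 z.re).comp Complex.reCLM) z :=
    hd.hasFDerivAt.comp z Complex.reCLM.hasFDerivAt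
  rw [h1.fderiv]
  simp

lemma wdz_eq_wdzbar_of (f : ℂ → ℂ) (z : ℂ) (h0 : fderiv ℝ f z Complex.I = 0) :
    wdz f z = wdzbar f z := by
  simp [wdz, wdzbar, h0]

lemma conj_wdz_real (g : ℂ → ℝ) (z : ℂ)
    (hg : DifferentiableAt ℝ (fun w => (g w : ℂ)) z) :
    (starRingEnd ℂ) (wdz (fun w => (g w : ℂ)) z) = wdzbar (fun w => (g w : ℂ)) z := by
  rw [← wdzbar_conj _ z hg]
  simp only [Complex.conj_ofReal]

/-- The Bonnet mate of a properly helicoidal surface in `𝕄²(κ) × ℝ`: if a fundamental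
data set for `(κ, 0)` on the strip `{Re z ∈ I}` depends only on `Re z`, then
`(λ, u, H, p̄, Ā)` is also a fundamental data set for `(κ, 0)` there. -/
theorem stmt_6 (κ : ℝ) (hκ : κ ≠ 0) (I : Set ℝ) (hIopen : IsOpen I)
    (hIconn : I.OrdConnected) (hIne : I.Nonempty)
    (lam u H : ℂ → ℝ) (p A : ℂ → ℂ)
    (lam0 u0 H0 : ℝ → ℝ) (p0 A0 : ℝ → ℂ)
    (hlam0 : ContDiffOn ℝ (⊤ : ℕ∞) lam0 I) (hu0 : ContDiffOn ℝ (⊤ : ℕ∞) u0 I)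
    (hH0 : ContDiffOn ℝ (⊤ : ℕ∞) H0 I) (hp0 : ContDiffOn ℝ (⊤ : ℕ∞) p0 I)
    (hA0 : ContDiffOn ℝ (⊤ : ℕ∞) A0 I)
    (hlam : ∀ z : ℂ, z.re ∈ I → lam z = lam0 z.re)
    (hu : ∀ z : ℂ, z.re ∈ I → u z = u0 z.re)
    (hH : ∀ z : ℂ, z.re ∈ I → H z = H0 z.re)
    (hp : ∀ z : ℂ, z.re ∈ I → p z = p0 z.re)
    (hA : ∀ z : ℂ, z.re ∈ I → A z = A0 z.re)
    (h : IsFundData κ 0 {z : ℂ | z.re ∈ I} lam u H p A) :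
    IsFundData κ 0 {z : ℂ | z.re ∈ I} lam u H
      (fun z => (starRingEnd ℂ) (p z)) (fun z => (starRingEnd ℂ) (A z)) := by
  have hΩ : IsOpen {z : ℂ | z.re ∈ I} := hIopen.preimage Complex.continuous_re
  have hH0c : ContDiffOn ℝ (⊤ : ℕ∞) (fun x => ((H0 x : ℝ) : ℂ)) I :=
    Complex.ofRealCLM.contDiff.comp_contDiffOn hH0
  have hu0c : ContDiffOn ℝ (⊤ : ℕ∞) (fun x => ((u0 x : ℝ) : ℂ)) I :=
    Complex.ofRealCLM.contDiff.comp_contDiffOn hu0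
  -- fderiv in direction I vanishes
  have hpI : ∀ z : ℂ, z.re ∈ I → fderiv ℝ p z Complex.I = 0 := fun z hz =>
    fderivI_zero p p0 hIopen hp0 hp hz
  have hAI : ∀ z : ℂ, z.re ∈ I → fderiv ℝ A z Complex.I = 0 := fun z hz =>
    fderivI_zero A A0 hIopen hA0 hA hz
  have hHI : ∀ z : ℂ, z.re ∈ I → fderiv ℝ (fun w => ((H w : ℝ) : ℂ)) z Complex.I = 0 :=
    fun z hz => fderivI_zero _ (fun x => ((H0 x : ℝ) : ℂ)) hIopen hH0c
      (fun w hw => by rw [hH w hw]) hz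
  have huI : ∀ z : ℂ, z.re ∈ I → fderiv ℝ (fun w => ((u w : ℝ) : ℂ)) z Complex.I = 0 :=
    fun z hz => fderivI_zero _ (fun x => ((u0 x : ℝ) : ℂ)) hIopen hu0c
      (fun w hw => by rw [hu w hw]) hz
  -- differentiability
  have hdp : ∀ z : ℂ, z.re ∈ I → DifferentiableAt ℝ p z := fun z hz =>
    (h.smooth_p.contDiffAt (hΩ.mem_nhds hz)).differentiableAt (by simp)
  have hdA : ∀ z : ℂ, z.re ∈ I → DifferentiableAt ℝ A z := fun z hz =>
    (h.smooth_A.contDiffAt (hΩ.mem_nhds hz)).differentiableAt (by simp)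
  have hdH : ∀ z : ℂ, z.re ∈ I → DifferentiableAt ℝ (fun w => ((H w : ℝ) : ℂ)) z := fun z hz =>
    (((Complex.ofRealCLM.contDiff.comp_contDiffOn h.smooth_H).contDiffAt
      (hΩ.mem_nhds hz)).differentiableAt (by simp))
  have hdu : ∀ z : ℂ, z.re ∈ I → DifferentiableAt ℝ (fun w => ((u w : ℝ) : ℂ)) z := fun z hz =>
    (((Complex.ofRealCLM.contDiff.comp_contDiffOn h.smooth_u).contDiffAt
      (hΩ.mem_nhds hz)).differentiableAt (by simp))
  -- conj of wdz of real functions of Re z equals itself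
  have hHconj : ∀ z : ℂ, z.re ∈ I →
      (starRingEnd ℂ) (wdz (fun w => ((H w : ℝ) : ℂ)) z) = wdz (fun w => ((H w : ℝ) : ℂ)) z :=
    fun z hz => by
      rw [conj_wdz_real H z (hdH z hz), ← wdz_eq_wdzbar_of _ z (hHI z hz)]
  have huconj : ∀ z : ℂ, z.re ∈ I →
      (starRingEnd ℂ) (wdz (fun w => ((u w : ℝ) : ℂ)) z) = wdz (fun w => ((u w : ℝ) : ℂ)) z :=
    fun z hz => by
      rw [conj_wdz_real u z (hdu z hz), ← wdz_eq_wdzbar_of _ z (huI z hz)]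
  refine ⟨h.smooth_lam, h.smooth_u, h.smooth_H,
    (Complex.conjCLE : ℂ ≃L[ℝ] ℂ).toContinuousLinearMap.contDiff.comp_contDiffOn h.smooth_p,
    (Complex.conjCLE : ℂ ≃L[ℝ] ℂ).toContinuousLinearMap.contDiff.comp_contDiffOn h.smooth_A,
    h.lam_pos, ?_, ?_, ?_, ?_⟩
  · intro z hz
    have e1 : wdzbar (fun w => (starRingEnd ℂ) (p w)) z = (starRingEnd ℂ) (wdzbar p z) := by
      rw [wdzbar_conj p z (hdp z hz), ← wdz_eq_wdzbar_of p z (hpI z hz)]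
    rw [e1, h.c1 z hz]
    simp only [map_mul, map_add, map_sub, map_div₀, map_ofNat, map_pow, Complex.conj_ofReal,
      hHconj z hz]
  · intro z hz
    have e1 : wdzbar (fun w => (starRingEnd ℂ) (A w)) z = (starRingEnd ℂ) (wdzbar A z) := by
      rw [wdzbar_conj A z (hdA z hz), ← wdz_eq_wdzbar_of A z (hAI z hz)]
    rw [e1, h.c2 z hz]
    simp [map_mul, map_add, map_div₀, map_ofNat, Complex.conj_ofReal, Complex.conj_I]
  · intro z hz
    have h3 := congrArg (starRingEnd ℂ) (h.c3 z hz)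
    rw [huconj z hz] at h3
    rw [h3]
    simp only [map_sub, map_mul, map_neg, map_div₀, map_ofNat, Complex.conj_ofReal,
      Complex.conj_I, Complex.ofReal_zero, map_zero, RingHomCompTriple.comp_apply,
      RingHom.id_apply, Complex.conj_conj]
    ring
  · intro z hz
    simpa [Complex.norm_conj] using h.c4 z hz
end
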